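/- arXiv:1909.12615 — 2 statements merged into one kernel-verified Lean document; each statement's English description precedes it below -/
import Mathlib

section
/- An inverse limit of an inverse system of finite tree sets (over a directed index set, with homomorphisms of separation systems as bonding maps) is itself a tree set: it is nested and contains no trivial elements. -/
/-- Orientation of a separation system with carrier `L ⊆ β` and
involution `I`: a subset of `L` containing exactly one orientation of each
separation in `L`. -/
def IsOrientationIn {β : Type*} [PartialOrder β] (L : Set β) (I : β → β)
    (O : Set β) : Prop :=
  O ⊆ L ∧ ∀ s ∈ L, (s ∈ O ↔ I s ∉ O)

/-- Consistency: no two elements with distinct underlying separations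
point away from each other. -/
def IsConsistentIn {β : Type*} [PartialOrder β] (I : β → β) (O : Set β) : Prop :=
  ∀ r ∈ O, ∀ s ∈ O, r ≠ s → r ≠ I s → ¬ I r ≤ s

/-- `m` is a maximal element of `O`. -/
def MaximalIn {β : Type*} [PartialOrder β] (O : Set β) (m : β) : Prop :=
  m ∈ O ∧ ∀ t ∈ O, m ≤ t → m = t

/-- `O` splits: every element lies below a maximal element of `O`. -/
def SplitsAt {β : Type*} [PartialOrder β] (O : Set β) : Prop :=
  ∀ s ∈ O, ∃ m, MaximalIn O m ∧ s ≤ m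

/-- A splitting star of the separation system on carrier `L`. -/
def IsSplittingStarIn {β : Type*} [PartialOrder β] (L : Set β) (I : β → β)
    (σ : Set β) : Prop :=
  ∃ O : Set β, IsOrientationIn L I O ∧ IsConsistentIn I O ∧ SplitsAt O ∧
    σ = {m | MaximalIn O m}

/-- A star contained in the carrier `L`. -/
def IsSepStarIn {β : Type*} [PartialOrder β] (L : Set β) (I : β → β)
    (σ : Set β) : Prop :=
  σ ⊆ L ∧ ∀ x ∈ σ, ∀ y ∈ σ, x ≠ y → x ≤ I y

/-- The separation system on carrier `L` (closed under the involution `I`)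
is a tree set: nested, with no trivial and no degenerate elements. -/
def IsTreeSetIn {β : Type*} [PartialOrder β] (L : Set β) (I : β → β) : Prop :=
  (∀ r ∈ L, I r ∈ L) ∧
  (∀ r ∈ L, ∀ s ∈ L, r ≤ s ∨ r ≤ I s ∨ I r ≤ s ∨ I r ≤ I s) ∧
  (∀ r ∈ L, ¬ ∃ s ∈ L, r ≤ s ∧ r ≤ I s ∧ r ≠ s ∧ r ≠ I s) ∧
  ∀ s ∈ L, s ≠ I s

/-- the inverse limit of an inverse system of finite tree sets
over a directed index set (with homomorphisms of separation systems as
bonding maps) is itself a tree set: nested, with no trivial elements. -/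
theorem stmt_4 {P : Type*} [Preorder P]
    (hdir : ∀ p q : P, ∃ r, p ≤ r ∧ q ≤ r)
    (S : P → Type*) [∀ p, PartialOrder (S p)] [∀ p, Finite (S p)]
    (iS : ∀ p, S p → S p)
    (hinv : ∀ p, (∀ s, iS p (iS p s) = s) ∧
      ∀ r s : S p, r ≤ s → iS p s ≤ iS p r)
    (htree : ∀ p, (∀ r s : S p,
        r ≤ s ∨ r ≤ iS p s ∨ iS p r ≤ s ∨ iS p r ≤ iS p s) ∧
      (∀ r : S p, ¬ ∃ s, r ≤ s ∧ r ≤ iS p s ∧ r ≠ s ∧ r ≠ iS p s) ∧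
      ∀ s : S p, s ≠ iS p s)
    (f : ∀ p q : P, p ≤ q → S q → S p)
    (hcomm : ∀ p q (h : p ≤ q) (s : S q), f p q h (iS q s) = iS p (f p q h s))
    (hmono : ∀ p q (h : p ≤ q), ∀ s t : S q, s ≤ t → f p q h s ≤ f p q h t)
    (hid : ∀ p (h : p ≤ p) (s : S p), f p p h s = s)
    (hcomp : ∀ p q r (hpq : p ≤ q) (hqr : q ≤ r) (s : S r),
      f p q hpq (f q r hqr s) = f p r (hpq.trans hqr) s)
    (L : Set (∀ p, S p))
    (hL : L = {x | ∀ p q (h : p ≤ q), f p q h (x q) = x p})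
    (I : (∀ p, S p) → ∀ p, S p)
    (hI : ∀ x p, I x p = iS p (x p)) :
    (∀ x ∈ L, ∀ y ∈ L, x ≤ y ∨ x ≤ I y ∨ I x ≤ y ∨ I x ≤ I y) ∧
    (∀ x ∈ L, ¬ ∃ y ∈ L, x ≤ y ∧ x ≤ I y ∧ x ≠ y ∧ x ≠ I y) := by
  classical
  subst hL
  constructor
  · intro x hx y hy
    rcases isEmpty_or_nonempty P with hP | hP
    · left; intro p; exact (hP.false p).elim
    set rel : Fin 4 → P → Prop := fun i p =>
      match i with
      | 0 => x p ≤ y p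
      | 1 => x p ≤ iS p (y p)
      | 2 => iS p (x p) ≤ y p
      | 3 => iS p (x p) ≤ iS p (y p) with hrel
    have hanti : ∀ p q (h : p ≤ q), ∀ i, rel i q → rel i p := by
      intro p q h i hi
      have hxf : f p q h (x q) = x p := hx p q h
      have hyf : f p q h (y q) = y p := hy p q h
      fin_cases i <;> simp only [hrel] at hi ⊢
      · rw [← hxf, ← hyf]; exact hmono p q h _ _ hi
      · rw [← hxf, ← hyf, ← hcomm]; exact hmono p q h _ _ hi
      · rw [← hxf, ← hyf, ← hcomm]; exact hmono p q h _ _ hi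
      · rw [← hxf, ← hyf, ← hcomm, ← hcomm]; exact hmono p q h _ _ hi
    set g : P → Finset (Fin 4) := fun p => Finset.univ.filter (fun i => rel i p)
      with hg
    have hgne : ∀ p, (g p).Nonempty := by
      intro p
      rcases (htree p).1 (x p) (y p) with h | h | h | h
      exacts [⟨0, by simp [hg, hrel, h]⟩, ⟨1, by simp [hg, hrel, h]⟩,
        ⟨2, by simp [hg, hrel, h]⟩, ⟨3, by simp [hg, hrel, h]⟩]
    have hgsub : ∀ p q (h : p ≤ q), g q ⊆ g p := by
      intro p q h i hi
      simp only [hg, Finset.mem_filter] at hi ⊢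
      exact ⟨hi.1, hanti p q h i hi.2⟩
    obtain ⟨p0⟩ := hP
    have hne : (Set.range fun p => (g p).card).Nonempty := ⟨_, p0, rfl⟩
    obtain ⟨r, hrcard⟩ : ∃ r, (g r).card = sInf (Set.range fun p => (g p).card) :=
      Nat.sInf_mem hne
    have hrmin : ∀ q, (g r).card ≤ (g q).card := by
      intro q; rw [hrcard]; exact Nat.sInf_le ⟨q, rfl⟩
    have hkey : ∀ p, g r ⊆ g p := by
      intro p
      obtain ⟨s, hps, hrs⟩ := hdir p r
      have h2 : g s = g r := Finset.eq_of_subset_of_card_le (hgsub r s hrs) (hrmin s)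
      rw [← h2]; exact hgsub p s hps
    obtain ⟨i, hi⟩ := hgne r
    have hiall : ∀ p, rel i p := fun p => (Finset.mem_filter.mp (hkey p hi)).2
    fin_cases i
    · exact Or.inl fun p => hiall p
    · exact Or.inr (Or.inl fun p => by rw [hI]; exact hiall p)
    · exact Or.inr (Or.inr (Or.inl fun p => by rw [hI]; exact hiall p))
    · exact Or.inr (Or.inr (Or.inr fun p => by rw [hI, hI]; exact hiall p))
  · rintro x hx ⟨y, hy, hxy, hxIy, hne1, hne2⟩
    have h1 : ∃ p, x p ≠ y p := by
      by_contra h; push_neg at h; exact hne1 (funext h)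
    have h2 : ∃ q, x q ≠ iS q (y q) := by
      by_contra h; push_neg at h
      exact hne2 (funext fun p => by rw [hI]; exact h p)
    obtain ⟨p, hp⟩ := h1
    obtain ⟨q, hq⟩ := h2
    obtain ⟨r, hpr, hqr⟩ := hdir p q
    refine (htree r).2.1 (x r) ⟨y r, hxy r, ?_, ?_, ?_⟩
    · have := hxIy r; rwa [hI] at this
    · intro h
      apply hp
      rw [← hx p r hpr, ← hy p r hpr, h]
    · intro h
      apply hq
      rw [← hx q r hqr, ← hy q r hqr, h, hcomm]
end

section
/- In a profinite tree set, every inclusion-maximal infinite star contains a small separation. Consequently, a regular profinite tree set contains no infinite star. -/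
open CategoryTheory


/-- in a profinite tree set every inclusion-maximal infinite
star contains a small separation; consequently a regular profinite tree set
contains no infinite star. -/
theorem stmt_18 {P : Type*} [Preorder P]
    (hdir : ∀ p q : P, ∃ r, p ≤ r ∧ q ≤ r)
    (S : P → Type*) [∀ p, PartialOrder (S p)] [∀ p, Finite (S p)]
    (iS : ∀ p, S p → S p)
    (hinv : ∀ p, (∀ s, iS p (iS p s) = s) ∧
      ∀ r s : S p, r ≤ s → iS p s ≤ iS p r)
    (f : ∀ p q : P, p ≤ q → S q → S p)
    (hcomm : ∀ p q (h : p ≤ q) (s : S q), f p q h (iS q s) = iS p (f p q h s))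
    (hmono : ∀ p q (h : p ≤ q), ∀ s t : S q, s ≤ t → f p q h s ≤ f p q h t)
    (hid : ∀ p (h : p ≤ p) (s : S p), f p p h s = s)
    (hcomp : ∀ p q r (hpq : p ≤ q) (hqr : q ≤ r) (s : S r),
      f p q hpq (f q r hqr s) = f p r (hpq.trans hqr) s)
    (L : Set (∀ p, S p))
    (hL : L = {x | ∀ p q (h : p ≤ q), f p q h (x q) = x p})
    (I : (∀ p, S p) → ∀ p, S p)
    (hI : ∀ x p, I x p = iS p (x p))
    (htree : IsTreeSetIn L I) :
    (∀ σ : Set (∀ p, S p), IsSepStarIn L I σ → σ.Infinite →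
      (∀ σ' : Set (∀ p, S p), σ ⊆ σ' → IsSepStarIn L I σ' → σ' = σ) →
      ∃ s ∈ σ, s ≤ I s) ∧
    ((∀ x ∈ L, ¬ x ≤ I x) →
      ∀ σ : Set (∀ p, S p), IsSepStarIn L I σ → σ.Finite) := by
  classical
  haveI : IsDirected P (· ≤ ·) := ⟨hdir⟩
  -- Key claim: any infinite star yields a small element of L lying "in the middle" of σ.
  have key : ∀ σ : Set (∀ p, S p), IsSepStarIn L I σ → σ.Infinite →
      ∃ s ∈ L, s ≤ I s ∧ ∀ x ∈ σ, x ≤ I s ∧ s ≤ I x := by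
    intro σ hσ hinf
    -- the set of points of S p with infinite fiber in σ
    set T : ∀ p, Set (S p) := fun p => {t | {x | x ∈ σ ∧ x p = t}.Infinite} with hT
    have hTne : ∀ p, (T p).Nonempty := by
      intro p
      haveI := hinf.to_subtype
      obtain ⟨t, ht⟩ := Finite.exists_infinite_fiber (fun x : σ => (x : ∀ p, S p) p)
      refine ⟨t, ?_⟩
      haveI := ht
      refine Set.infinite_of_injective_forall_mem
        (f := fun z : ((fun x : σ => (x : ∀ p, S p) p) ⁻¹' {t}) => (z.1 : ∀ p, S p)) ?_ ?_
      · intro a b hab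
        exact Subtype.ext (Subtype.ext hab)
      · rintro ⟨⟨x, hx⟩, hxt⟩
        exact ⟨hx, hxt⟩
    have hTmap : ∀ (p q : P) (h : p ≤ q), ∀ t ∈ T q, f p q h t ∈ T p := by
      intro p q h t ht
      refine Set.Infinite.mono ?_ ht
      rintro x ⟨hx, hxt⟩
      refine ⟨hx, ?_⟩
      have hxL := hσ.1 hx
      rw [hL] at hxL
      rw [← hxt]
      exact (hxL p q h).symm
    -- the inverse system of the T p's
    let F : Pᵒᵖ ⥤ Type _ :=
      { obj := fun p => ↥(T p.unop)
        map := fun {p q} h => TypeCat.ofHom fun t =>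
          ⟨f q.unop p.unop (leOfHom h.unop) t.1, hTmap _ _ _ _ t.2⟩
        map_id := fun p => ConcreteCategory.hom_ext _ _ fun t => Subtype.ext (hid _ _ _)
        map_comp := fun {p q r} h1 h2 => ConcreteCategory.hom_ext _ _ fun t =>
          Subtype.ext (hcomp _ _ _ _ _ _).symm }
    haveI : ∀ j : Pᵒᵖ, Finite (F.obj j) := fun j => Subtype.finite
    haveI : ∀ j : Pᵒᵖ, Nonempty (F.obj j) := fun j => (hTne j.unop).to_subtype
    obtain ⟨u, hu⟩ := nonempty_sections_of_finite_inverse_system F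
    set s : ∀ p, S p := fun p => (u (Opposite.op p)).1 with hs
    have hsL : s ∈ L := by
      rw [hL]
      intro p q h
      have h1 := hu (j := Opposite.op q) (j' := Opposite.op p) ((homOfLE h).op)
      have h2 := congrArg Subtype.val h1
      exact h2
    have hfib : ∀ p, {x | x ∈ σ ∧ x p = s p}.Infinite := fun p => (u (Opposite.op p)).2
    have hy : ∀ (p : P) (x : ∀ p, S p), ∃ y, y ∈ σ ∧ y p = s p ∧ y ≠ x := by
      intro p x
      obtain ⟨y, hy⟩ := ((hfib p).diff (Set.finite_singleton x)).nonempty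
      exact ⟨y, hy.1.1, hy.1.2, by simpa using hy.2⟩
    refine ⟨s, hsL, ?_, ?_⟩
    · intro p
      obtain ⟨y1, hy1σ, hy1p, _⟩ := hy p s
      obtain ⟨y2, hy2σ, hy2p, hy21⟩ := hy p y1
      have hle := hσ.2 y2 hy2σ y1 hy1σ hy21 p
      rw [hI] at hle ⊢
      rw [hy2p, hy1p] at hle
      exact hle
    · intro x hx
      constructor
      · intro p
        obtain ⟨y, hyσ, hyp, hyx⟩ := hy p x
        have hle := hσ.2 x hx y hyσ (Ne.symm hyx) p
        rw [hI] at hle ⊢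
        rw [hyp] at hle
        exact hle
      · intro p
        obtain ⟨y, hyσ, hyp, hyx⟩ := hy p x
        have hle := hσ.2 y hyσ x hx hyx p
        rw [← hyp]
        exact hle
  constructor
  · -- a maximal infinite star contains a small separation
    intro σ hσ hinf hmax
    obtain ⟨s, hsL, hss, hall⟩ := key σ hσ hinf
    have hstar : IsSepStarIn L I (σ ∪ {s}) := by
      constructor
      · rintro x (hx | hx)
        · exact hσ.1 hx
        · rw [Set.mem_singleton_iff] at hx
          rw [hx]; exact hsL
      · rintro x (hx | hx) y (hy | hy) hxy
        · exact hσ.2 x hx y hy hxy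
        · rw [Set.mem_singleton_iff] at hy
          rw [hy]; exact (hall x hx).1
        · rw [Set.mem_singleton_iff] at hx
          rw [hx]; exact (hall y hy).2
        · rw [Set.mem_singleton_iff] at hx hy
          exact absurd (hx.trans hy.symm) hxy
    have heq := hmax (σ ∪ {s}) Set.subset_union_left hstar
    have hsσ : s ∈ σ := by
      rw [← heq]; exact Set.mem_union_right σ rfl
    exact ⟨s, hsσ, hss⟩
  · -- a regular profinite tree set has no infinite star
    intro hreg σ hσ
    by_contra hfin
    obtain ⟨s, hsL, hss, -⟩ := key σ hσ hfin
    exact hreg s hsL hss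
end
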